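/- arXiv:2008.13355 — 9 statements merged into one kernel-verified Lean document; each statement's English description precedes it below -/
import Mathlib

section
/- If s and t are states of a labelled transition system with s ⇔Δ t (s and t are divergence-preserving branching bisimilar), then s is divergent only if t is divergent; i.e., divergence-preserving branching bisimilarity relates divergent states to divergent states only. -/
/-- The internal-step relation: `s →τ s'`. -/
def TauStep {S Act : Type*} (tr : S → Act → S → Prop) (τ : Act) : S → S → Prop :=
  fun x y => tr x τ y

/-- `⇒` : the reflexive-transitive closure of `→τ`. -/
def TauReach {S Act : Type*} (tr : S → Act → S → Prop) (τ : Act) : S → S → Prop :=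
  Relation.ReflTransGen (TauStep tr τ)

/-- `→τ⁺` : the transitive closure of `→τ`. -/
def TauPlus {S Act : Type*} (tr : S → Act → S → Prop) (τ : Act) : S → S → Prop :=
  Relation.TransGen (TauStep tr τ)

/-- `s →(a)̂ s'` : either `s →a s'`, or `a = τ` and `s = s'`. -/
def OptStep {S Act : Type*} (tr : S → Act → S → Prop) (τ : Act)
    (s : S) (a : Act) (s' : S) : Prop :=
  tr s a s' ∨ (a = τ ∧ s = s')

/-- Condition (T) of branching bisimulations. -/
def CondT {S Act : Type*} (tr : S → Act → S → Prop) (τ : Act) (B : S → S → Prop) : Prop :=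
  ∀ s t a s', B s t → tr s a s' →
    ∃ t'' t', TauReach tr τ t t'' ∧ OptStep tr τ t'' a t' ∧ B s t'' ∧ B s' t'

/-- A branching bisimulation: a symmetric relation satisfying condition (T). -/
def IsBranchingBisim {S Act : Type*} (tr : S → Act → S → Prop) (τ : Act)
    (B : S → S → Prop) : Prop :=
  Symmetric B ∧ CondT tr τ B

/-- The divergence condition (D). -/
def CondD {S Act : Type*} (tr : S → Act → S → Prop) (τ : Act) (B : S → S → Prop) : Prop :=
  ∀ s t (sk : ℕ → S), B s t → sk 0 = s → (∀ k, tr (sk k) τ (sk (k + 1))) →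
    (∀ k, B (sk k) t) → ∃ t', TauPlus tr τ t t' ∧ ∃ k, B (sk k) t'

/-- A divergence-preserving branching bisimulation. -/
def IsDPBB {S Act : Type*} (tr : S → Act → S → Prop) (τ : Act) (B : S → S → Prop) : Prop :=
  IsBranchingBisim tr τ B ∧ CondD tr τ B

/-- Divergence-preserving branching bisimilarity `s ⇔Δ t`. -/
def DPBBisimilar {S Act : Type*} (tr : S → Act → S → Prop) (τ : Act) (s t : S) : Prop :=
  ∃ B, IsDPBB tr τ B ∧ B s t

/-- A state is divergent if it admits an infinite sequence of τ-transitions. -/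
def Divergent {S Act : Type*} (tr : S → Act → S → Prop) (τ : Act) (s : S) : Prop :=
  ∃ sk : ℕ → S, sk 0 = s ∧ ∀ k, tr (sk k) τ (sk (k + 1))

/-!
Let `B` be a divergence-preserving branching bisimulation and call a state *good* if it
τ-reaches a state related by `B` to a divergent state. Every good state has a good
τ-successor, so good states are divergent. Indeed, if `x` itself is related to a divergent
`s₀ →τ s₁ →τ ⋯`, then either `x` stays related to all `sₖ`, and (D) yields a nonempty τ-path
from `x` to a state related to some `sₖ`; or there is a first `k` with `sₖ B x` but not
`sₖ₊₁ B x`, and (T) answers `sₖ →τ sₖ₊₁` from `x` with a τ-path that cannot be empty.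
-/

section

variable {S Act : Type*} {tr : S → Act → S → Prop} {τ : Act}

theorem Divergent.of_seq {u : ℕ → S} (hu : ∀ k, tr (u k) τ (u (k + 1))) (m : ℕ) :
    Divergent tr τ (u m) :=
  ⟨fun i => u (m + i), rfl, fun k => hu (m + k)⟩

theorem divergent_of_forall_exists_tauStep {P : S → Prop}
    (hP : ∀ x, P x → ∃ y, tr x τ y ∧ P y) {s : S} (hs : P s) : Divergent tr τ s := by
  choose! next hnext hPnext using hP
  have hPiter : ∀ n, P (next^[n] s) := by
    intro n
    induction n with
    | zero => exact hs
    | succ n ih => rw [Function.iterate_succ_apply']; exact hPnext _ ih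
  refine ⟨fun n => next^[n] s, rfl, fun k => ?_⟩
  simp only [Function.iterate_succ_apply']
  exact hnext _ (hPiter k)

namespace CondT

variable {B : S → S → Prop}

theorem exists_tauPlus_of_not_rel (hT : CondT tr τ B) {s s' t : S} (hrel : B s t)
    (hstep : tr s τ s') (hnot : ¬ B s' t) : ∃ t', TauPlus tr τ t t' ∧ B s' t' := by
  obtain ⟨t'', t', hreach, hopt, -, hrel'⟩ := hT s t τ s' hrel hstep
  rcases hopt with hstep' | ⟨-, rfl⟩
  · exact ⟨t', Relation.TransGen.tail' hreach hstep', hrel'⟩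
  · rcases Relation.reflTransGen_iff_eq_or_transGen.mp hreach with rfl | hplus
    · exact absurd hrel' hnot
    · exact ⟨t'', hplus, hrel'⟩

theorem exists_tauPlus_rel_of_seq (hT : CondT tr τ B) (hD : CondD tr τ B) {u : ℕ → S}
    (hu : ∀ k, tr (u k) τ (u (k + 1))) {t : S} (hrel : B (u 0) t) :
    ∃ t', TauPlus tr τ t t' ∧ ∃ m, B (u m) t' := by
  by_cases hall : ∀ k, B (u k) t
  · exact hD (u 0) t u hrel rfl hu hall
  · obtain ⟨j, hj, hj'⟩ := Nat.exists_not_and_succ_of_not_zero_of_exists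
      (p := fun k => ¬ B (u k) t) (not_not.mpr hrel) (not_forall.mp hall)
    obtain ⟨t', hplus, hrel'⟩ := hT.exists_tauPlus_of_not_rel (not_not.mp hj) (hu j) hj'
    exact ⟨t', hplus, j + 1, hrel'⟩

theorem exists_tauStep_of_tauReach_rel_divergent (hT : CondT tr τ B) (hD : CondD tr τ B)
    {s t x : S} (hs : Divergent tr τ s) (hrel : B s t) (hreach : TauReach tr τ x t) :
    ∃ y, tr x τ y ∧ ∃ t' s', TauReach tr τ y t' ∧ B s' t' ∧ Divergent tr τ s' := by
  rcases Relation.reflTransGen_iff_eq_or_transGen.mp hreach with rfl | hplus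
  · obtain ⟨u, rfl, hu⟩ := hs
    obtain ⟨t', hplus, m, hrel'⟩ := hT.exists_tauPlus_rel_of_seq hD hu hrel
    obtain ⟨y, hxy, hyt'⟩ := Relation.TransGen.head'_iff.mp hplus
    exact ⟨y, hxy, t', u m, hyt', hrel', .of_seq hu m⟩
  · obtain ⟨y, hxy, hyt⟩ := Relation.TransGen.head'_iff.mp hplus
    exact ⟨y, hxy, t, s, hyt, hrel, hs⟩

end CondT

end

/-- divergence-preserving branching bisimilarity relates divergent states
to divergent states only. -/
theorem dpbb_preserves_divergence {S Act : Type*} (tr : S → Act → S → Prop) (τ : Act)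
    (s t : S) (h : DPBBisimilar tr τ s t) (hdiv : Divergent tr τ s) :
    Divergent tr τ t := by
  obtain ⟨B, ⟨⟨-, hT⟩, hD⟩, hst⟩ := h
  refine divergent_of_forall_exists_tauStep
    (P := fun x => ∃ x' s', TauReach tr τ x x' ∧ B s' x' ∧ Divergent tr τ s') ?_
    ⟨t, s, .refl, hst, hdiv⟩
  rintro x ⟨x', s', hreach, hrel, hs'⟩
  exact hT.exists_tauStep_of_tauReach_rel_divergent hD hs' hrel hreach
end

section
/- Let B be a divergence-preserving branching bisimulation on a labelled transition system, let s B t, and let (s_k)_{k∈ℕ} be an infinite sequence of states with s = s_0 and s_k →τ s_{k+1} for all k. Then there exist an infinite sequence of states (t_ℓ)_{ℓ∈ℕ} with t = t_0 and t_ℓ →τ⁺ t_{ℓ+1} for all ℓ, and a mapping σ : ℕ → ℕ such that s_{σ(ℓ)} B t_ℓ for all ℓ ∈ ℕ. -/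
/-!
From any state related to some state of the divergence, a nonempty τ-path leads to a state
again related to some state of the divergence: if the divergence stays in the class of the
current state forever, (D) provides the path; otherwise (T), applied to the τ-step that leaves
the class, does. Iterating this step by dependent choice yields the sequence and `σ`.
-/

theorem Nat.exists_le_and_not_succ_of_exists_not {P : ℕ → Prop} {n : ℕ} (hn : P n)
    (h : ∃ k ≥ n, ¬ P k) : ∃ m ≥ n, P m ∧ ¬ P (m + 1) := by
  by_contra! hsucc
  obtain ⟨k, hk, hPk⟩ := h
  exact hPk (Nat.le_induction hn (fun m hm hPm ↦ hsucc m hm hPm) k hk)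

theorem exists_seq_of_forall_exists {α : Type*} {P : α → Prop} {R : α → α → Prop}
    (h : ∀ a, P a → ∃ b, P b ∧ R a b) {a : α} (ha : P a) :
    ∃ f : ℕ → α, f 0 = a ∧ ∀ n, P (f n) ∧ R (f n) (f (n + 1)) :=
  let f : ℕ → {a // P a} := Nat.rec ⟨a, ha⟩ fun _ b ↦ ⟨_, (h b.1 b.2).choose_spec.1⟩
  ⟨(f · |>.1), rfl, fun n ↦ ⟨(f n).2, (h (f n).1 (f n).2).choose_spec.2⟩⟩

/-- The matching transition of `t` cannot be the empty one, which would keep `s'` related to `t`. -/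
theorem CondT.exists_tauPlus_of_tauStep_of_not_rel {S Act : Type*} {tr : S → Act → S → Prop}
    {τ : Act} {B : S → S → Prop} (hT : CondT tr τ B) {s s' t : S} (hst : B s t)
    (hss' : tr s τ s') (hs't : ¬ B s' t) : ∃ t', TauPlus tr τ t t' ∧ B s' t' := by
  obtain ⟨t'', t', hreach, hopt, -, hs't'⟩ := hT s t τ s' hst hss'
  refine ⟨t', ?_, hs't'⟩
  rcases hopt with hstep | ⟨-, rfl⟩
  · exact Relation.TransGen.tail' hreach hstep
  · rcases Relation.reflTransGen_iff_eq_or_transGen.mp hreach with rfl | hplus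
    · exact absurd hs't' hs't
    · exact hplus

theorem CondD.exists_tauPlus_of_rel_divergence {S Act : Type*} {tr : S → Act → S → Prop}
    {τ : Act} {B : S → S → Prop} (hD : CondD tr τ B) (hT : CondT tr τ B) {sk : ℕ → S}
    (hstep : ∀ k, tr (sk k) τ (sk (k + 1))) {n : ℕ} {u : S} (hu : B (sk n) u) :
    ∃ u' m, TauPlus tr τ u u' ∧ B (sk m) u' := by
  by_cases hstay : ∀ k ≥ n, B (sk k) u
  · obtain ⟨u', hplus, k, hk⟩ := hD (sk n) u (fun k ↦ sk (n + k)) hu rfl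
      (fun k ↦ hstep (n + k)) (fun k ↦ hstay (n + k) (Nat.le_add_right n k))
    exact ⟨u', n + k, hplus, hk⟩
  · push Not at hstay
    obtain ⟨m, -, hm, hm1⟩ :=
      Nat.exists_le_and_not_succ_of_exists_not (P := fun k ↦ B (sk k) u) hu hstay
    obtain ⟨u', hplus, hu'⟩ := hT.exists_tauPlus_of_tauStep_of_not_rel hm (hstep m) hm1
    exact ⟨u', m + 1, hplus, hu'⟩

/-- from a divergence of s and a divergence-preserving branching
bisimulation B with s B t one can construct an infinite →τ⁺-sequence from t together
with a mapping σ matching its states to states on the divergence of s. -/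
theorem dpbb_divergence_matching {S Act : Type*} (tr : S → Act → S → Prop) (τ : Act)
    (B : S → S → Prop) (hB : IsDPBB tr τ B) (s t : S) (hst : B s t)
    (sk : ℕ → S) (h0 : sk 0 = s) (hstep : ∀ k, tr (sk k) τ (sk (k + 1))) :
    ∃ (tl : ℕ → S) (σ : ℕ → ℕ),
      tl 0 = t ∧ (∀ l, TauPlus tr τ (tl l) (tl (l + 1))) ∧
      (∀ l, B (sk (σ l)) (tl l)) := by
  subst h0
  have hnext (p : S × ℕ) (hp : B (sk p.2) p.1) :
      ∃ q : S × ℕ, B (sk q.2) q.1 ∧ TauPlus tr τ p.1 q.1 := by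
    obtain ⟨u', m, hplus, hu'⟩ := hB.2.exists_tauPlus_of_rel_divergence hB.1.2 hstep hp
    exact ⟨(u', m), hu', hplus⟩
  obtain ⟨f, hf0, hf⟩ := exists_seq_of_forall_exists hnext (a := (t, 0)) hst
  exact ⟨(f · |>.1), (f · |>.2), congrArg Prod.fst hf0, fun l ↦ (hf l).2,
    fun l ↦ (hf l).1⟩
end

section
/- In the labelled transition system with states {s, s1, s2, t, t1, t2} and transitions s →τ s, s →τ s1, s →a s2, s1 →τ s1, t →τ t1, t →a t2, t1 →τ t1 (where a ≠ τ), the symmetric closure of the relation {(s,t), (s1,t1), (s2,t2)} satisfies condition (T) of branching bisimulations and relates divergent states to divergent states only (i.e., whenever it relates u to v and u is divergent, then v is divergent). -/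
/-- The six states of the example labelled transition system. -/
inductive ExSt : Type
  | s | s1 | s2 | t | t1 | t2

/-- Transitions: s →τ s, s →τ s1, s →a s2, s1 →τ s1, t →τ t1, t →a t2, t1 →τ t1. -/
def exTr (Act : Type*) (τ a : Act) : ExSt → Act → ExSt → Prop := fun x α y =>
  (x = .s ∧ α = τ ∧ y = .s) ∨
  (x = .s ∧ α = τ ∧ y = .s1) ∨
  (x = .s ∧ α = a ∧ y = .s2) ∨
  (x = .s1 ∧ α = τ ∧ y = .s1) ∨
  (x = .t ∧ α = τ ∧ y = .t1) ∨
  (x = .t ∧ α = a ∧ y = .t2) ∨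
  (x = .t1 ∧ α = τ ∧ y = .t1)

/-- The symmetric closure of {(s,t), (s1,t1), (s2,t2)}. -/
def exR : ExSt → ExSt → Prop := fun x y =>
  (x = .s ∧ y = .t) ∨ (x = .s1 ∧ y = .t1) ∨ (x = .s2 ∧ y = .t2) ∨
  (y = .s ∧ x = .t) ∨ (y = .s1 ∧ x = .t1) ∨ (y = .s2 ∧ x = .t2)


/-!
A step of the related state can always be matched by the partner without any preceding
internal steps: either the partner takes the same transition, or the step is a τ-step that stays
related to the partner, which then answers with the empty step. For divergence, `s2` and `t2` are
the only states without a τ-loop within reach, and they are related only to each other.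
-/

section LTS

variable {S Act : Type*} {tr : S → Act → S → Prop} {τ : Act}

theorem condT_of_forall_step_matched {B : S → S → Prop}
    (h : ∀ s t α s', B s t → tr s α s' → (α = τ ∧ B s' t) ∨ ∃ t', tr t α t' ∧ B s' t') :
    CondT tr τ B := by
  intro s t α s' hst hstep
  rcases h s t α s' hst hstep with ⟨hα, hs't⟩ | ⟨t', htt', hs't'⟩
  · exact ⟨t, t, .refl, Or.inr ⟨hα, rfl⟩, hst, hs't⟩
  · exact ⟨t, t', .refl, Or.inl htt', hst, hs't'⟩

theorem divergent_of_tau_loop {x : S} (h : tr x τ x) : Divergent tr τ x :=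
  ⟨fun _ => x, rfl, fun _ => h⟩

theorem Divergent.of_tau_step {x y : S} (hxy : tr x τ y) (hy : Divergent tr τ y) :
    Divergent tr τ x := by
  obtain ⟨sk, hsk0, hsk⟩ := hy
  refine ⟨fun k => Nat.casesOn k x sk, rfl, fun k => ?_⟩
  cases k with
  | zero => simpa [hsk0] using hxy
  | succ k => exact hsk k

theorem not_divergent_of_forall_not_tau_step {x : S} (h : ∀ y, ¬ tr x τ y) :
    ¬ Divergent tr τ x := by
  rintro ⟨sk, hsk0, hsk⟩
  exact h (sk 1) (hsk0 ▸ hsk 0)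

end LTS

section Example

variable {Act : Type*} {τ a : Act}

theorem exR_symmetric : Symmetric exR := by
  intro x y h
  unfold exR at *
  tauto

theorem exTr_step_matched_of_exR (u v : ExSt) (α : Act) (u' : ExSt) (huv : exR u v)
    (hstep : exTr Act τ a u α u') :
    (α = τ ∧ exR u' v) ∨ ∃ v', exTr Act τ a v α v' ∧ exR u' v' := by
  rcases huv with ⟨rfl, rfl⟩ | ⟨rfl, rfl⟩ | ⟨rfl, rfl⟩ | ⟨rfl, rfl⟩ | ⟨rfl, rfl⟩ | ⟨rfl, rfl⟩ <;>
    rcases hstep with ⟨hu, rfl, rfl⟩ | ⟨hu, rfl, rfl⟩ | ⟨hu, rfl, rfl⟩ | ⟨hu, rfl, rfl⟩ |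
      ⟨hu, rfl, rfl⟩ | ⟨hu, rfl, rfl⟩ | ⟨hu, rfl, rfl⟩ <;>
    cases hu <;> simp [exR, exTr]

theorem exTr_divergent_iff (x : ExSt) :
    Divergent (exTr Act τ a) τ x ↔ x ≠ .s2 ∧ x ≠ .t2 := by
  cases x
  case s | s1 | t1 => exact iff_of_true (divergent_of_tau_loop (by simp [exTr])) (by simp)
  case t =>
    have ht1 : Divergent (exTr Act τ a) τ .t1 := divergent_of_tau_loop (by simp [exTr])
    exact iff_of_true (ht1.of_tau_step (by simp [exTr])) (by simp)
  case s2 | t2 =>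
    exact iff_of_false (not_divergent_of_forall_not_tau_step (by simp [exTr])) (by simp)

end Example

theorem exR_condT_and_divergence_respecting_general (Act : Type*) (τ a : Act) :
    Symmetric exR ∧ CondT (exTr Act τ a) τ exR ∧
    (∀ u v, exR u v → Divergent (exTr Act τ a) τ u → Divergent (exTr Act τ a) τ v) := by
  refine ⟨exR_symmetric, condT_of_forall_step_matched exTr_step_matched_of_exR, ?_⟩
  intro u v huv
  rcases huv with ⟨rfl, rfl⟩ | ⟨rfl, rfl⟩ | ⟨rfl, rfl⟩ | ⟨rfl, rfl⟩ | ⟨rfl, rfl⟩ | ⟨rfl, rfl⟩ <;>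
    simp [exTr_divergent_iff]

/-- in the example system, the symmetric closure of
{(s,t), (s1,t1), (s2,t2)} satisfies condition (T) and relates divergent states to
divergent states only. -/
theorem exR_condT_and_divergence_respecting (Act : Type*) (τ a : Act) (hne : a ≠ τ) :
    Symmetric exR ∧ CondT (exTr Act τ a) τ exR ∧
    (∀ u v, exR u v → Divergent (exTr Act τ a) τ u → Divergent (exTr Act τ a) τ v) :=
  exR_condT_and_divergence_respecting_general Act τ a
end

section
/- In the labelled transition system with states {s, s1, s2, t, t1, t2} and transitions s →τ s, s →τ s1, s →a s2, s1 →τ s1, t →τ t1, t →a t2, t1 →τ t1 (where a ≠ τ), the states s and t are not divergence-preserving branching bisimilar. -/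
/-!
The τ-loop at `s` is a divergence along which every state is related to `t`, so (D) forces
`t` to do a τ-step to a state related to `s`; the only such state is `t1`. But `t1` can only
τ-loop on itself and has no `a`-transition, so (T) cannot match `s →a s2` from `t1`.
-/

section General

variable {S Act : Type*} {tr : S → Act → S → Prop} {τ : Act} {B : S → S → Prop}

theorem tauReach_eq_of_tauStep_eq {x y : S} (hx : ∀ y, tr x τ y → y = x)
    (h : TauReach tr τ x y) : y = x := by
  induction h with
  | refl => rfl
  | tail _ hstep ih => subst ih; exact hx _ hstep

theorem CondD.exists_tauPlus_of_tauLoop (hD : CondD tr τ B) {s t : S} (hst : B s t)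
    (hloop : tr s τ s) : ∃ t', TauPlus tr τ t t' ∧ B s t' := by
  obtain ⟨t', ht', -, hst'⟩ := hD s t (fun _ => s) hst rfl (fun _ => hloop) (fun _ => hst)
  exact ⟨t', ht', hst'⟩

theorem CondT.exists_tauReach_step (hT : CondT tr τ B) {s t s' : S} {a : Act} (hst : B s t)
    (hs : tr s a s') (ha : a ≠ τ) : ∃ t'' t', TauReach tr τ t t'' ∧ tr t'' a t' := by
  obtain ⟨t'', t', hreach, hstep | ⟨rfl, -⟩, -⟩ := hT s t a s' hst hs
  · exact ⟨t'', t', hreach, hstep⟩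
  · exact absurd rfl ha

end General

section Example

variable {Act : Type*} {τ a : Act} {y : ExSt}

theorem exTr_t_tau (hne : a ≠ τ) (h : exTr Act τ a .t τ y) : y = .t1 := by
  simp_all [exTr, hne.symm]

theorem exTr_t1_tau (h : exTr Act τ a .t1 τ y) : y = .t1 := by
  simp_all [exTr]

theorem exTr_t1_not_step (hne : a ≠ τ) : ¬ exTr Act τ a .t1 a y := by
  simp [exTr, hne]

theorem exTr_t_tauPlus (hne : a ≠ τ) (h : TauPlus (exTr Act τ a) τ .t y) : y = .t1 := by
  obtain ⟨u, hu, hreach⟩ := Relation.TransGen.head'_iff.mp h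
  obtain rfl := exTr_t_tau hne hu
  exact tauReach_eq_of_tauStep_eq (fun _ => exTr_t1_tau) hreach

end Example

/-- in the example system, states s and t are not
divergence-preserving branching bisimilar. -/
theorem ex_s_t_not_dpbb (Act : Type*) (τ a : Act) (hne : a ≠ τ) :
    ¬ DPBBisimilar (exTr Act τ a) τ ExSt.s ExSt.t := by
  rintro ⟨B, ⟨⟨-, hT⟩, hD⟩, hst⟩
  obtain ⟨t', ht', hst'⟩ := hD.exists_tauPlus_of_tauLoop hst (Or.inl ⟨rfl, rfl, rfl⟩)
  obtain rfl := exTr_t_tauPlus hne ht'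
  obtain ⟨t'', t''', hreach, hstep⟩ :=
    hT.exists_tauReach_step hst' (Or.inr (Or.inr (Or.inl ⟨rfl, rfl, rfl⟩))) hne
  obtain rfl := tauReach_eq_of_tauStep_eq (fun _ => exTr_t1_tau) hreach
  exact exTr_t1_not_step hne hstep
end

section
/- Divergence-preserving branching bisimilarity ⇔Δ is an equivalence relation on the states of any labelled transition system: it is reflexive, symmetric and transitive. -/
/-!
Reflexivity and symmetry are immediate (`=` is a divergence-preserving branching bisimulation and
the definition is symmetric). For transitivity, the relation `B₁ ∘ B₂ ∪ B₂ ∘ B₁` is again a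
divergence-preserving branching bisimulation; condition (T) composes directly. For (D), let
`s B₁ t B₂ u` with `s` divergent. A `B₁`-partner of a state on the divergent run can always move by
`→τ⁺` to another such partner, so `t` has an infinite τ-run along which every state can still reach
such a partner. Applying the same fact for `B₂` to this run lets `u` make a `→τ⁺` step and end up
`B₂`-related to a state of that run, which then `τ`-reaches a `B₁`-partner of the original run, and
`u` follows it by (T).
-/

open Relation

local infixr:80 " ∘r " => Relation.Comp

section

variable {S Act : Type*} {tr : S → Act → S → Prop} {τ : Act}

lemma tauReach_of_optStep {t t'' t' : S} (h : TauReach tr τ t t'')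
    (h' : OptStep tr τ t'' τ t') : TauReach tr τ t t' := by
  rcases h' with h' | ⟨-, rfl⟩
  · exact h.tail h'
  · exact h

lemma CondT.exists_tauReach_of_tauReach {B : S → S → Prop} (hT : CondT tr τ B) {s s' t : S}
    (hB : B s t) (h : TauReach tr τ s s') : ∃ t', TauReach tr τ t t' ∧ B s' t' := by
  induction h with
  | refl => exact ⟨t, .refl, hB⟩
  | tail _ hstep ih =>
    obtain ⟨t₁, ht₁, hB₁⟩ := ih
    obtain ⟨t'', t', h, h', -, hB'⟩ := hT _ _ _ _ hB₁ hstep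
    exact ⟨t', ht₁.trans (tauReach_of_optStep h h'), hB'⟩

lemma CondT.comp {B₁ B₂ : S → S → Prop} (h₁ : CondT tr τ B₁) (h₂ : CondT tr τ B₂) :
    CondT tr τ (B₁ ∘r B₂) := by
  rintro s u a s' ⟨t, hst, htu⟩ hs
  obtain ⟨t'', t', ht, ht'', hst'', hst'⟩ := h₁ s t a s' hst hs
  obtain ⟨u₁, hu₁, ht''u₁⟩ := h₂.exists_tauReach_of_tauReach htu ht
  rcases ht'' with hstep | ⟨rfl, rfl⟩
  · obtain ⟨u'', u', hu, hu'', ht''u'', ht'u'⟩ := h₂ t'' u₁ a t' ht''u₁ hstep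
    exact ⟨u'', u', hu₁.trans hu, hu'', ⟨t'', hst'', ht''u''⟩, ⟨t', hst', ht'u'⟩⟩
  · exact ⟨u₁, u₁, hu₁, Or.inr ⟨rfl, rfl⟩, ⟨t'', hst'', ht''u₁⟩, ⟨t'', hst', ht''u₁⟩⟩

lemma CondT.sup {B₁ B₂ : S → S → Prop} (h₁ : CondT tr τ B₁) (h₂ : CondT tr τ B₂) :
    CondT tr τ (B₁ ⊔ B₂) := by
  rintro s t a s' (hB | hB) hs
  · obtain ⟨t'', t', ht, ht', hB'', hB'⟩ := h₁ s t a s' hB hs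
    exact ⟨t'', t', ht, ht', Or.inl hB'', Or.inl hB'⟩
  · obtain ⟨t'', t', ht, ht', hB'', hB'⟩ := h₂ s t a s' hB hs
    exact ⟨t'', t', ht, ht', Or.inr hB'', Or.inr hB'⟩

lemma Nat.exists_and_not_succ_of_not_forall {p : ℕ → Prop} (h₀ : p 0) (h : ¬∀ n, p n) :
    ∃ n, p n ∧ ¬p (n + 1) := by
  by_contra! hsucc
  exact h fun n => Nat.rec h₀ hsucc n

/-- Either the partner stays related along the whole run and (D) applies, or it is left behind
at a first step, where (T) forces it to move. -/
lemma exists_tauPlus_of_run {B : S → S → Prop} (hT : CondT tr τ B) (hD : CondD tr τ B)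
    {sk : ℕ → S} (hsk : ∀ k, tr (sk k) τ (sk (k + 1))) {t : S} (ht : B (sk 0) t) :
    ∃ t', TauPlus tr τ t t' ∧ ∃ k, B (sk k) t' := by
  by_cases hall : ∀ k, B (sk k) t
  · exact hD _ t sk ht rfl hsk hall
  obtain ⟨n, hn, hn'⟩ := Nat.exists_and_not_succ_of_not_forall ht hall
  obtain ⟨t'', t', h, h', -, hB⟩ := hT _ _ _ _ hn (hsk n)
  rcases reflTransGen_iff_eq_or_transGen.1 (tauReach_of_optStep h h') with rfl | h
  · exact absurd hB hn'
  · exact ⟨t', h, n + 1, hB⟩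

lemma exists_chain_of_forall_exists {α : Type*} {r : α → α → Prop} {Q : Set α}
    (hQ : ∀ x ∈ Q, ∃ y ∈ Q, r x y) {a : α} (ha : a ∈ Q) :
    ∃ f : ℕ → α, f 0 = a ∧ (∀ n, r (f n) (f (n + 1))) ∧ ∀ n, f n ∈ Q := by
  have hnacc (x : Q) : ¬Acc (fun y x : Q => r x y) x := fun hacc => by
    induction hacc with
    | intro x _ ih =>
      obtain ⟨y, hy, hxy⟩ := hQ x x.2
      exact ih ⟨y, hy⟩ hxy
  obtain ⟨f, hf₀, hf⟩ := not_acc_iff_exists_descending_chain.1 (hnacc ⟨a, ha⟩)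
  exact ⟨fun n => f n, congrArg Subtype.val hf₀, hf, fun n => (f n).2⟩

lemma comp_divergence {B₁ B₂ : S → S → Prop} (hT₁ : CondT tr τ B₁) (hD₁ : CondD tr τ B₁)
    (hT₂ : CondT tr τ B₂) (hD₂ : CondD tr τ B₂) {sk : ℕ → S}
    (hsk : ∀ k, tr (sk k) τ (sk (k + 1))) {u : S} (h : (B₁ ∘r B₂) (sk 0) u) :
    ∃ u', TauPlus tr τ u u' ∧ ∃ k, (B₁ ∘r B₂) (sk k) u' := by
  obtain ⟨t, hst, htu⟩ := h
  set Q : Set S := {y | ∃ x, TauReach tr τ y x ∧ ∃ k, B₁ (sk k) x}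
  have hQ : ∀ y ∈ Q, ∃ y' ∈ Q, tr y τ y' := by
    rintro y ⟨x, hyx, k, hx⟩
    obtain ⟨x', hxx', k', hx'⟩ :=
      exists_tauPlus_of_run hT₁ hD₁ (sk := fun j => sk (k + j)) (fun j => hsk (k + j)) hx
    obtain ⟨y', hstep, hy'⟩ := TransGen.head'_iff.1 (TransGen.trans_right hyx hxx')
    exact ⟨y', ⟨x', hy', k + k', hx'⟩, hstep⟩
  obtain ⟨ρ, hρ₀, hρ, hρQ⟩ := exists_chain_of_forall_exists hQ ⟨t, .refl, 0, hst⟩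
  obtain ⟨u₁, hu₁, m, hρu₁⟩ := exists_tauPlus_of_run hT₂ hD₂ hρ (hρ₀ ▸ htu)
  obtain ⟨x, hx, k, hsx⟩ := hρQ m
  obtain ⟨u', hu', hxu'⟩ := hT₂.exists_tauReach_of_tauReach hρu₁ hx
  exact ⟨u', TransGen.trans_left hu₁ hu', k, x, hsx, hxu'⟩

lemma isDPBB_eq : IsDPBB tr τ Eq := by
  refine ⟨⟨fun _ _ h => h.symm, ?_⟩, ?_⟩
  · rintro s _ a s' rfl hs
    exact ⟨s, s', .refl, Or.inl hs, rfl, rfl⟩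
  · rintro s _ sk rfl rfl hsk -
    exact ⟨sk 1, .single (hsk 0), 1, rfl⟩

lemma IsDPBB.comp_sup_comp {B₁ B₂ : S → S → Prop} (h₁ : IsDPBB tr τ B₁)
    (h₂ : IsDPBB tr τ B₂) : IsDPBB tr τ (B₁ ∘r B₂ ⊔ B₂ ∘r B₁) := by
  obtain ⟨⟨hS₁, hT₁⟩, hD₁⟩ := h₁
  obtain ⟨⟨hS₂, hT₂⟩, hD₂⟩ := h₂
  refine ⟨⟨?_, (hT₁.comp hT₂).sup (hT₂.comp hT₁)⟩, ?_⟩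
  · rintro s t (⟨m, hsm, hmt⟩ | ⟨m, hsm, hmt⟩)
    · exact Or.inr ⟨m, hS₂ hmt, hS₁ hsm⟩
    · exact Or.inl ⟨m, hS₁ hmt, hS₂ hsm⟩
  · rintro s u sk (h | h) rfl hsk -
    · obtain ⟨u', hu', k, h'⟩ := comp_divergence hT₁ hD₁ hT₂ hD₂ hsk h
      exact ⟨u', hu', k, Or.inl h'⟩
    · obtain ⟨u', hu', k, h'⟩ := comp_divergence hT₂ hD₂ hT₁ hD₁ hsk h
      exact ⟨u', hu', k, Or.inr h'⟩

end

/-- divergence-preserving branching bisimilarity is an equivalence. -/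
theorem dpbb_equivalence {S Act : Type*} (tr : S → Act → S → Prop) (τ : Act) :
    Equivalence (DPBBisimilar tr τ) := by
  refine ⟨fun _ => ⟨Eq, isDPBB_eq, rfl⟩, fun ⟨B, hB, h⟩ => ⟨B, hB, hB.1.1 h⟩, ?_⟩
  rintro s t u ⟨B₁, h₁, hst⟩ ⟨B₂, h₂, htu⟩
  exact ⟨_, h₁.comp_sup_comp h₂, Or.inl ⟨t, hst, htu⟩⟩
end

section
/- Divergence-preserving branching bisimilarity satisfies the stuttering property: if t_0 →τ t_1 →τ ⋯ →τ t_n is a finite sequence of τ-transitions, s ⇔Δ t_0 and s ⇔Δ t_n, then s ⇔Δ t_i for all 0 ≤ i ≤ n. -/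
/-!
Let `R` relate `s` to every `t j` and every `t j` to `s`. Then `⇔Δ ∪ R` is itself a
divergence-preserving branching bisimulation, because each of its pairs `(x, y)` can be
completed to a `⇔Δ`-pair `(x, y')` with `y ⇒ y'`: for `(s, t j)` take `y' = t n`, and for
`(t j, s)` let `s` simulate the path `t 0 ⇒ t j`. Every challenge from `x` can then be
answered from `y'`, hence from `y`.
-/

section

variable {S Act : Type*} {tr : S → Act → S → Prop} {τ : Act}

theorem TauReach.trans_optStep {x y z : S} (hxy : TauReach tr τ x y)
    (hyz : OptStep tr τ y τ z) : TauReach tr τ x z := by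
  rcases hyz with hyz | ⟨-, rfl⟩
  · exact hxy.tail hyz
  · exact hxy

theorem TauReach.of_chain {n : ℕ} {t : ℕ → S} (hstep : ∀ i < n, tr (t i) τ (t (i + 1)))
    {i j : ℕ} (hij : i ≤ j) (hj : j ≤ n) : TauReach tr τ (t i) (t j) :=
  (reflTransGen_of_succ_of_le (fun a b => TauStep tr τ (t a) (t b))
    (fun k hk => hstep k (hk.2.trans_le hj)) hij).lift t fun _ _ => id

theorem CondT.exists_tauReach {B : S → S → Prop} (hT : CondT tr τ B) {x y x' : S}
    (hxy : B x y) (hx : TauReach tr τ x x') : ∃ y', TauReach tr τ y y' ∧ B x' y' := by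
  induction hx with
  | refl => exact ⟨y, .refl, hxy⟩
  | tail _ hstep ih =>
    obtain ⟨y₁, hyy₁, hB₁⟩ := ih
    obtain ⟨y'', y', hy₁y'', hy''y', -, hB'⟩ := hT _ _ _ _ hB₁ hstep
    exact ⟨y', TauReach.trans_optStep (hyy₁.trans hy₁y'') hy''y', hB'⟩

theorem IsDPBB.exists_tauPlus_of_run {B : S → S → Prop} (hB : IsDPBB tr τ B) {u : ℕ → S}
    {z : S} (hu : ∀ k, tr (u k) τ (u (k + 1))) (h0 : B (u 0) z) :
    ∃ z', TauPlus tr τ z z' ∧ ∃ k, B (u k) z' := by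
  by_contra! hnot
  -- Without an escape through `→τ⁺`, condition (T) keeps the whole run related to `z`.
  have hall : ∀ k, B (u k) z := by
    intro k
    induction k with
    | zero => exact h0
    | succ k ih =>
      obtain ⟨z'', z', hzz'', hz''z', -, hB'⟩ := hB.1.2 _ _ _ _ ih (hu k)
      rcases Relation.reflTransGen_iff_eq_or_transGen.mp (hzz''.trans_optStep hz''z') with
        rfl | hplus
      · exact hB'
      · exact absurd hB' (hnot z' hplus (k + 1))
  obtain ⟨z', hplus, k, hB'⟩ := hB.2 _ z u h0 rfl hu hall
  exact hnot z' hplus k hB'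

namespace DPBBisimilar

theorem symm {x y : S} (h : DPBBisimilar tr τ x y) : DPBBisimilar tr τ y x :=
  let ⟨B, hB, hxy⟩ := h
  ⟨B, hB, hB.1.1 hxy⟩

theorem condT : CondT tr τ (DPBBisimilar tr τ) := by
  rintro x y a x' ⟨B, hB, hxy⟩ hx
  obtain ⟨y'', y', hyy'', hy''y', hB'', hB'⟩ := hB.1.2 _ _ _ _ hxy hx
  exact ⟨y'', y', hyy'', hy''y', ⟨B, hB, hB''⟩, ⟨B, hB, hB'⟩⟩

theorem exists_tauPlus_of_run {u : ℕ → S} {z : S} (hu : ∀ k, tr (u k) τ (u (k + 1)))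
    (h0 : DPBBisimilar tr τ (u 0) z) :
    ∃ z', TauPlus tr τ z z' ∧ ∃ k, DPBBisimilar tr τ (u k) z' := by
  obtain ⟨B, hB, hB0⟩ := h0
  obtain ⟨z', hz', k, hk⟩ := hB.exists_tauPlus_of_run hu hB0
  exact ⟨z', hz', k, B, hB, hk⟩

end DPBBisimilar

theorem isDPBB_of_forall_exists_tauReach {B : S → S → Prop} (hsymm : Symmetric B)
    (hle : ∀ x y, DPBBisimilar tr τ x y → B x y)
    (hreach : ∀ x y, B x y → ∃ y', TauReach tr τ y y' ∧ DPBBisimilar tr τ x y') :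
    IsDPBB tr τ B := by
  refine ⟨⟨hsymm, ?_⟩, ?_⟩
  · intro x y a x' hxy hx
    obtain ⟨y₀, hyy₀, hxy₀⟩ := hreach x y hxy
    obtain ⟨y'', y', hy₀y'', hy''y', hB'', hB'⟩ := DPBBisimilar.condT _ _ _ _ hxy₀ hx
    exact ⟨y'', y', hyy₀.trans hy₀y'', hy''y', hle _ _ hB'', hle _ _ hB'⟩
  · rintro x y u hxy rfl hu -
    obtain ⟨y₀, hyy₀, hxy₀⟩ := hreach _ y hxy
    obtain ⟨z', hz', k, hk⟩ := DPBBisimilar.exists_tauPlus_of_run hu hxy₀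
    exact ⟨z', Relation.TransGen.trans_right hyy₀ hz', k, hle _ _ hk⟩

end

/-- the stuttering property for divergence-preserving branching
bisimilarity. -/
theorem dpbb_stuttering {S Act : Type*} (tr : S → Act → S → Prop) (τ : Act)
    (s : S) (n : ℕ) (t : ℕ → S) (hstep : ∀ i < n, tr (t i) τ (t (i + 1)))
    (h0 : DPBBisimilar tr τ s (t 0)) (hn : DPBBisimilar tr τ s (t n)) :
    ∀ i ≤ n, DPBBisimilar tr τ s (t i) := by
  intro i hi
  let B : S → S → Prop := fun x y => DPBBisimilar tr τ x y ∨
    (x = s ∧ ∃ j ≤ n, y = t j) ∨ (y = s ∧ ∃ j ≤ n, x = t j)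
  have hsymm : Symmetric B := by
    rintro x y (h | h | h)
    exacts [Or.inl h.symm, Or.inr (Or.inr h), Or.inr (Or.inl h)]
  have hreach : ∀ x y, B x y → ∃ y', TauReach tr τ y y' ∧ DPBBisimilar tr τ x y' := by
    rintro x y (h | ⟨rfl, j, hj, rfl⟩ | ⟨rfl, j, hj, rfl⟩)
    · exact ⟨y, .refl, h⟩
    · exact ⟨t n, .of_chain hstep hj le_rfl, hn⟩
    · exact DPBBisimilar.condT.exists_tauReach h0.symm (.of_chain hstep j.zero_le hj)
  exact ⟨B, isDPBB_of_forall_exists_tauReach hsymm (fun _ _ => Or.inl) hreach,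
    Or.inr (Or.inl ⟨rfl, i, hi, rfl⟩)⟩
end

section
/- The weak divergence condition (D) characterises the same bisimilarity as the strong divergence condition (D'): for all states s and t, s ⇔Δ t (i.e., s and t are related by a branching bisimulation satisfying condition (D)) if and only if s and t are related by a branching bisimulation B satisfying condition (D'): whenever u B v and there is an infinite sequence (u_k)_{k∈ℕ} with u = u_0, u_k →τ u_{k+1} and u_k B v for all k, then there is an infinite sequence (v_ℓ)_{ℓ∈ℕ} with v = v_0 and v_ℓ →τ v_{ℓ+1} for all ℓ, such that every v_ℓ is related by B to some u_k. -/
/-- The strong divergence condition (D'). -/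
def CondD' {S Act : Type*} (tr : S → Act → S → Prop) (τ : Act) (B : S → S → Prop) : Prop :=
  ∀ u v (uk : ℕ → S), B u v → uk 0 = u → (∀ k, tr (uk k) τ (uk (k + 1))) →
    (∀ k, B (uk k) v) →
    ∃ vl : ℕ → S, vl 0 = v ∧ (∀ l, tr (vl l) τ (vl (l + 1))) ∧
      ∀ l, ∃ k, B (uk k) (vl l)

/-!
(D') gives (D) by taking the first step of the matching τ-path. Conversely, the point is that
`⇔Δ` itself satisfies (D'). It is stuttering-closed: if `s ⇔Δ t` and `s ⇔Δ t₂` with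
`t ⇒ t₁ ⇒ t₂`, then adding `(s, t₁)` and `(t₁, s)` to a witnessing relation keeps it a
divergence-preserving branching bisimulation. Using this, a divergence `u = u₀ →τ u₁ →τ ⋯` with
`u ⇔Δ v` can be answered by a single step `v →τ v₁` with `uⱼ ⇔Δ v₁` for some `j`, and iterating
this step (dependent choice) produces the τ-path demanded by (D').
-/

lemma exists_and_not_succ_of_exists_not {P : ℕ → Prop} (h0 : P 0) (h : ∃ m, ¬ P m) :
    ∃ n, P n ∧ ¬ P (n + 1) := by
  by_contra! hsucc
  obtain ⟨m, hm⟩ := h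
  exact hm (Nat.rec h0 hsucc m)

lemma exists_seq_of_forall_exists_rel {α : Type*} {r : α → α → Prop} (h : ∀ a, ∃ b, r a b)
    (a : α) : ∃ f : ℕ → α, f 0 = a ∧ ∀ n, r (f n) (f (n + 1)) := by
  choose g hg using h
  exact ⟨fun n => g^[n] a, rfl, fun n => by simpa only [Function.iterate_succ_apply'] using hg _⟩

section Bisimulation

variable {S Act : Type*} {tr : S → Act → S → Prop} {τ : Act} {B : S → S → Prop}

lemma TauReach.trans_optStep_s10 {t t'' t' : S} (h : TauReach tr τ t t'')
    (hopt : OptStep tr τ t'' τ t') : TauReach tr τ t t' := by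
  rcases hopt with hstep | ⟨-, rfl⟩
  · exact h.tail hstep
  · exact h

lemma CondT.exists_tauReach_rel (hT : CondT tr τ B) {q q' : S} (h : TauReach tr τ q q') :
    ∀ {r}, B q r → ∃ r', TauReach tr τ r r' ∧ B q' r' := by
  induction h with
  | refl => exact fun hB => ⟨_, Relation.ReflTransGen.refl, hB⟩
  | tail _ hstep ih =>
    intro r hB
    obtain ⟨r₁, hr₁, hB₁⟩ := ih hB
    obtain ⟨r'', r', hreach, hopt, -, hB'⟩ := hT _ _ _ _ hB₁ hstep
    exact ⟨r', TauReach.trans_optStep_s10 (hr₁.trans hreach) hopt, hB'⟩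

/-- The transition at which a τ-path first leaves the `B`-class of `t`, and its match under (T). -/
lemma CondT.exists_escape (hT : CondT tr τ B) {t : S} {sk : ℕ → S} (h0 : B (sk 0) t)
    (hsteps : ∀ k, tr (sk k) τ (sk (k + 1))) (hleave : ∃ m, ¬ B (sk m) t) :
    ∃ n t'' t', TauReach tr τ t t'' ∧ OptStep tr τ t'' τ t' ∧ B (sk n) t ∧ B (sk n) t'' ∧
      B (sk (n + 1)) t' ∧ ¬ B (sk (n + 1)) t := by
  obtain ⟨n, hn, hn'⟩ := exists_and_not_succ_of_exists_not h0 hleave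
  obtain ⟨t'', t', hreach, hopt, hB'', hB'⟩ := hT _ _ _ _ hn (hsteps n)
  exact ⟨n, t'', t', hreach, hopt, hn, hB'', hB', hn'⟩

/-- If the divergence leaves the class of `t`, the (T)-answer to the leaving step is a nonempty
τ-path from `t`. -/
lemma IsDPBB.exists_tauPlus_rel (hB : IsDPBB tr τ B) {t : S} {sk : ℕ → S} (h0 : B (sk 0) t)
    (hsteps : ∀ k, tr (sk k) τ (sk (k + 1))) :
    ∃ t', TauPlus tr τ t t' ∧ ∃ j, B (sk j) t' := by
  by_cases hall : ∀ m, B (sk m) t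
  · exact hB.2 _ t sk h0 rfl hsteps hall
  obtain ⟨n, t'', t', hreach, hopt, -, -, hB', hnot⟩ :=
    hB.1.2.exists_escape h0 hsteps (not_forall.mp hall)
  rcases Relation.reflTransGen_iff_eq_or_transGen.mp (hreach.trans_optStep_s10 hopt) with rfl | hplus
  · exact absurd hB' hnot
  · exact ⟨t', hplus, n + 1, hB'⟩

lemma IsDPBB.of_forall_exists_tauReach_rel {R R' : S → S → Prop} (hR : IsDPBB tr τ R)
    (hsymm : Symmetric R') (hle : ∀ a b, R a b → R' a b)
    (hreach : ∀ a b, R' a b → ∃ c, TauReach tr τ b c ∧ R a c) : IsDPBB tr τ R' := by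
  refine ⟨⟨hsymm, ?_⟩, ?_⟩
  · intro a b x a' hab hstep
    obtain ⟨c, hbc, hac⟩ := hreach a b hab
    obtain ⟨t'', t', hreach', hopt, hB'', hB'⟩ := hR.1.2 a c x a' hac hstep
    exact ⟨t'', t', hbc.trans hreach', hopt, hle _ _ hB'', hle _ _ hB'⟩
  · rintro a b sk hab rfl hsteps -
    obtain ⟨c, hbc, hac⟩ := hreach _ b hab
    obtain ⟨t', hplus, j, hj⟩ := hR.exists_tauPlus_rel hac hsteps
    exact ⟨t', Relation.TransGen.trans_right hbc hplus, j, hle _ _ hj⟩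

lemma IsDPBB.dpbbisimilar_of_tauReach {R : S → S → Prop} (hR : IsDPBB tr τ R) {s t t₁ t₂ : S}
    (hst : R s t) (h₁ : TauReach tr τ t t₁) (h₂ : TauReach tr τ t₁ t₂) (hst₂ : R s t₂) :
    DPBBisimilar tr τ s t₁ := by
  obtain ⟨σ, hsσ, ht₁σ⟩ := hR.1.2.exists_tauReach_rel h₁ (hR.1.1 hst)
  let R' := fun a b => R a b ∨ (a = s ∧ b = t₁) ∨ (a = t₁ ∧ b = s)
  have hsymm : Symmetric R' := by
    rintro a b (h | ⟨rfl, rfl⟩ | ⟨rfl, rfl⟩)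
    · exact Or.inl (hR.1.1 h)
    · exact Or.inr (Or.inr ⟨rfl, rfl⟩)
    · exact Or.inr (Or.inl ⟨rfl, rfl⟩)
  have hreach : ∀ a b, R' a b → ∃ c, TauReach tr τ b c ∧ R a c := by
    rintro a b (h | ⟨rfl, rfl⟩ | ⟨rfl, rfl⟩)
    · exact ⟨b, Relation.ReflTransGen.refl, h⟩
    · exact ⟨t₂, h₂, hst₂⟩
    · exact ⟨σ, hsσ, ht₁σ⟩
  exact ⟨R', hR.of_forall_exists_tauReach_rel hsymm (fun _ _ => Or.inl) hreach,
    Or.inr (Or.inl ⟨rfl, rfl⟩)⟩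

lemma IsDPBB.exists_tauStep_dpbbisimilar (hB : IsDPBB tr τ B) {t : S} {sk : ℕ → S}
    (h0 : B (sk 0) t) (hsteps : ∀ k, tr (sk k) τ (sk (k + 1))) :
    ∃ y, tr t τ y ∧ ∃ j, DPBBisimilar tr τ (sk j) y := by
  by_cases hall : ∀ m, B (sk m) t
  · obtain ⟨t', hplus, j, hj⟩ := hB.2 _ t sk h0 rfl hsteps hall
    obtain ⟨y, hy, hyt'⟩ := Relation.TransGen.head'_iff.mp hplus
    exact ⟨y, hy, j, hB.dpbbisimilar_of_tauReach (hall j) (.single hy) hyt' hj⟩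
  obtain ⟨n, t'', t', hreach, hopt, hn, hn'', hB', hnot⟩ :=
    hB.1.2.exists_escape h0 hsteps (not_forall.mp hall)
  rcases Relation.reflTransGen_iff_eq_or_transGen.mp hreach with rfl | hplus
  · rcases hopt with hstep | ⟨-, rfl⟩
    · exact ⟨t', hstep, n + 1, B, hB, hB'⟩
    · exact absurd hB' hnot
  · obtain ⟨y, hy, hyt''⟩ := Relation.TransGen.head'_iff.mp hplus
    exact ⟨y, hy, n, hB.dpbbisimilar_of_tauReach hn (.single hy) hyt'' hn''⟩

lemma isBranchingBisim_dpbbisimilar : IsBranchingBisim tr τ (DPBBisimilar tr τ) := by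
  refine ⟨fun _ _ ⟨B, hB, h⟩ => ⟨B, hB, hB.1.1 h⟩, ?_⟩
  rintro u v a u' ⟨B, hB, h⟩ hstep
  obtain ⟨t'', t', hreach, hopt, hB'', hB'⟩ := hB.1.2 u v a u' h hstep
  exact ⟨t'', t', hreach, hopt, ⟨B, hB, hB''⟩, ⟨B, hB, hB'⟩⟩

lemma condD'_dpbbisimilar : CondD' tr τ (DPBBisimilar tr τ) := by
  intro u v uk huv h0 hsteps _
  have hnext : ∀ p : {p : ℕ × S // DPBBisimilar tr τ (uk p.1) p.2},
      ∃ q : {p : ℕ × S // DPBBisimilar tr τ (uk p.1) p.2}, tr p.1.2 τ q.1.2 := by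
    rintro ⟨⟨k, w⟩, B, hB, hw⟩
    obtain ⟨y, hy, j, hj⟩ :=
      hB.exists_tauStep_dpbbisimilar (sk := fun m => uk (k + m)) hw (fun m => hsteps (k + m))
    exact ⟨⟨(k + j, y), hj⟩, hy⟩
  obtain ⟨f, hf0, hf⟩ := exists_seq_of_forall_exists_rel hnext ⟨(0, v), h0 ▸ huv⟩
  exact ⟨fun l => (f l).1.2, by simp only [hf0], hf, fun l => ⟨(f l).1.1, (f l).2⟩⟩

lemma CondD'.condD (hD' : CondD' tr τ B) : CondD tr τ B := by
  intro u w sk hB h0 hsteps hrel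
  obtain ⟨vl, hv0, hvsteps, hvrel⟩ := hD' u w sk hB h0 hsteps hrel
  obtain ⟨k, hk⟩ := hvrel 1
  exact ⟨vl 1, .single (hv0 ▸ hvsteps 0), k, hk⟩

end Bisimulation

/-- the weak divergence condition (D) and the strong divergence
condition (D') characterise the same bisimilarity. -/
theorem dpbb_weak_iff_strong_divergence {S Act : Type*} (tr : S → Act → S → Prop)
    (τ : Act) (s t : S) :
    DPBBisimilar tr τ s t ↔
      ∃ B, IsBranchingBisim tr τ B ∧ CondD' tr τ B ∧ B s t := by
  constructor
  · rintro ⟨B, hB, hst⟩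
    exact ⟨DPBBisimilar tr τ, isBranchingBisim_dpbbisimilar, condD'_dpbbisimilar, B, hB, hst⟩
  · rintro ⟨B, hB, hD', hst⟩
    exact ⟨B, ⟨hB, hD'.condD⟩, hst⟩
end

section
/- Divergence-preserving branching bisimilarity is compatible with interleaving parallel composition: if s1 ⇔Δ t1 in a labelled transition system (S1, →1) and s2 ⇔Δ t2 in a labelled transition system (S2, →2) over the same action set, then (s1, s2) ⇔Δ (t1, t2) in the interleaving parallel composition, i.e., the labelled transition system with state set S1 × S2 and transitions (u1, u2) →a (u1', u2) whenever u1 →1a u1', and (u1, u2) →a (u1, u2') whenever u2 →2a u2'. -/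
/-- Interleaving parallel composition of two labelled transition systems. -/
def ParTr {S1 S2 Act : Type*} (tr1 : S1 → Act → S1 → Prop) (tr2 : S2 → Act → S2 → Prop) :
    S1 × S2 → Act → S1 × S2 → Prop := fun p a q =>
  (tr1 p.1 a q.1 ∧ p.2 = q.2) ∨ (tr2 p.2 a q.2 ∧ p.1 = q.1)


/-! The product of a divergence-preserving branching bisimulation on each component is one on
the parallel composition. Transfer (T) is componentwise. For (D), a τ-path in the product moves
infinitely often in one of the two components; there the projected path is a τ-path up to
stuttering, and dropping the stuttering steps gives a genuine τ-path to which (D) of that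
component applies. -/

open Filter Relation

theorem exists_chain_of_frequently {α : Type*} {r : α → α → Prop} {f : ℕ → α}
    (hf : ∀ k, ¬ r (f k) (f (k + 1)) → f k = f (k + 1))
    (hr : ∃ᶠ k in atTop, r (f k) (f (k + 1))) :
    ∃ g : ℕ → ℕ, ∀ j, r (f (g j)) (f (g (j + 1))) := by
  set P : ℕ → Prop := fun k => r (f k) (f (k + 1))
  have hP : {k | P k}.Infinite := Nat.frequently_atTop_iff_infinite.1 hr
  -- `Nat.nth P` enumerates the `r`-steps, and `f` is constant between two consecutive ones.
  refine ⟨Nat.nth P, fun j => ?_⟩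
  have hlt : Nat.nth P j < Nat.nth P (j + 1) := Nat.nth_strictMono hP (Nat.lt_succ_self j)
  have hstutter : ∀ n, Nat.nth P j + 1 ≤ n → n ≤ Nat.nth P (j + 1) →
      f (Nat.nth P j + 1) = f n := by
    intro n hn
    induction n, hn using Nat.le_induction with
    | base => exact fun _ => rfl
    | succ k hk ih =>
      intro hkn
      have hPk : ¬ P k := fun hPk =>
        absurd (Nat.le_nth_of_lt_nth_succ (k := j) (by omega) hPk) (by omega)
      exact (ih (by omega)).trans (hf k hPk)
  exact hstutter _ hlt le_rfl ▸ Nat.nth_mem_of_infinite hP j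

section Transfer

variable {S S' Act : Type*} {tr : S → Act → S → Prop} {tr' : S' → Act → S' → Prop} {τ : Act}
  {φ : S → S'}

theorem TauReach.map (hφ : ∀ x a y, tr x a y → tr' (φ x) a (φ y)) {x y : S}
    (h : TauReach tr τ x y) : TauReach tr' τ (φ x) (φ y) :=
  ReflTransGen.lift φ (fun _ _ => hφ _ τ _) _ _ h

theorem TauPlus.map (hφ : ∀ x a y, tr x a y → tr' (φ x) a (φ y)) {x y : S}
    (h : TauPlus tr τ x y) : TauPlus tr' τ (φ x) (φ y) :=
  TransGen.lift φ (fun _ _ => hφ _ τ _) _ _ h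

theorem OptStep.map (hφ : ∀ x a y, tr x a y → tr' (φ x) a (φ y)) {x y : S} {a : Act}
    (h : OptStep tr τ x a y) : OptStep tr' τ (φ x) a (φ y) :=
  h.imp (hφ x a y) fun ⟨ha, hxy⟩ => ⟨ha, congrArg φ hxy⟩

end Transfer

theorem CondD.exists_of_frequently {S Act : Type*} {tr : S → Act → S → Prop} {τ : Act}
    {B : S → S → Prop} (hD : CondD tr τ B) {t : S} {f : ℕ → S}
    (hf : ∀ k, ¬ tr (f k) τ (f (k + 1)) → f k = f (k + 1))
    (hτ : ∃ᶠ k in atTop, tr (f k) τ (f (k + 1))) (hB : ∀ k, B (f k) t) :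
    ∃ t', TauPlus tr τ t t' ∧ ∃ k, B (f k) t' := by
  obtain ⟨g, hg⟩ := exists_chain_of_frequently (r := TauStep tr τ) hf hτ
  obtain ⟨t', ht', k, hk⟩ := hD _ t (f ∘ g) (hB _) rfl hg fun j => hB (g j)
  exact ⟨t', ht', g k, hk⟩

section Parallel

variable {S1 S2 Act : Type*} {tr1 : S1 → Act → S1 → Prop} {tr2 : S2 → Act → S2 → Prop}
  {τ : Act}

theorem ParTr.left {x y : S1} {a : Act} (c : S2) (h : tr1 x a y) :
    ParTr tr1 tr2 (x, c) a (y, c) :=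
  Or.inl ⟨h, rfl⟩

theorem ParTr.right {x y : S2} {a : Act} (c : S1) (h : tr2 x a y) :
    ParTr tr1 tr2 (c, x) a (c, y) :=
  Or.inr ⟨h, rfl⟩

theorem ParTr.fst_eq_of_not_left {p q : S1 × S2} {a : Act} (h : ParTr tr1 tr2 p a q)
    (h1 : ¬ tr1 p.1 a q.1) : p.1 = q.1 :=
  h.elim (fun h' => absurd h'.1 h1) And.right

theorem ParTr.snd_eq_of_not_right {p q : S1 × S2} {a : Act} (h : ParTr tr1 tr2 p a q)
    (h2 : ¬ tr2 p.2 a q.2) : p.2 = q.2 :=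
  h.elim And.right (fun h' => absurd h'.1 h2)

def ProdRel (B1 : S1 → S1 → Prop) (B2 : S2 → S2 → Prop) : S1 × S2 → S1 × S2 → Prop :=
  fun p q => B1 p.1 q.1 ∧ B2 p.2 q.2

variable {B1 : S1 → S1 → Prop} {B2 : S2 → S2 → Prop}

theorem condT_parTr (hT1 : CondT tr1 τ B1) (hT2 : CondT tr2 τ B2) :
    CondT (ParTr tr1 tr2) τ (ProdRel B1 B2) := by
  rintro ⟨p1, p2⟩ ⟨q1, q2⟩ a ⟨p1', p2'⟩ ⟨hb1, hb2⟩ (⟨h, hp2⟩ | ⟨h, hp1⟩)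
  · obtain ⟨u, u', hu, hu', hbu, hbu'⟩ := hT1 p1 q1 a p1' hb1 h
    exact ⟨(u, q2), (u', q2), hu.map fun _ _ _ => ParTr.left q2,
      hu'.map fun _ _ _ => ParTr.left q2, ⟨hbu, hb2⟩, ⟨hbu', hp2 ▸ hb2⟩⟩
  · obtain ⟨u, u', hu, hu', hbu, hbu'⟩ := hT2 p2 q2 a p2' hb2 h
    exact ⟨(q1, u), (q1, u'), hu.map fun _ _ _ => ParTr.right q1,
      hu'.map fun _ _ _ => ParTr.right q1, ⟨hb1, hbu⟩, ⟨hp1 ▸ hb1, hbu'⟩⟩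

theorem condD_parTr (hD1 : CondD tr1 τ B1) (hD2 : CondD tr2 τ B2) :
    CondD (ParTr tr1 tr2) τ (ProdRel B1 B2) := by
  intro _ t f _ _ hf hB
  have hmoves : ∃ᶠ k in atTop, tr1 (f k).1 τ (f (k + 1)).1 ∨ tr2 (f k).2 τ (f (k + 1)).2 :=
    Frequently.of_forall fun k => (hf k).imp And.left And.left
  rcases frequently_or_distrib.1 hmoves with hτ | hτ
  · obtain ⟨t1', ht1', k, hk⟩ := hD1.exists_of_frequently
      (fun k => (hf k).fst_eq_of_not_left) hτ fun k => (hB k).1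
    exact ⟨(t1', t.2), ht1'.map fun _ _ _ => ParTr.left t.2, k, hk, (hB k).2⟩
  · obtain ⟨t2', ht2', k, hk⟩ := hD2.exists_of_frequently
      (fun k => (hf k).snd_eq_of_not_right) hτ fun k => (hB k).2
    exact ⟨(t.1, t2'), ht2'.map fun _ _ _ => ParTr.right t.1, k, (hB k).1, hk⟩

theorem IsDPBB.parTr (h1 : IsDPBB tr1 τ B1) (h2 : IsDPBB tr2 τ B2) :
    IsDPBB (ParTr tr1 tr2) τ (ProdRel B1 B2) :=
  ⟨⟨fun _ _ h => ⟨h1.1.1 h.1, h2.1.1 h.2⟩, condT_parTr h1.1.2 h2.1.2⟩, condD_parTr h1.2 h2.2⟩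

end Parallel

/-- divergence-preserving branching bisimilarity is compatible with
interleaving parallel composition. -/
theorem dpbb_parallel_compatible {S1 S2 Act : Type*}
    (tr1 : S1 → Act → S1 → Prop) (tr2 : S2 → Act → S2 → Prop) (τ : Act)
    (s1 t1 : S1) (s2 t2 : S2)
    (h1 : DPBBisimilar tr1 τ s1 t1) (h2 : DPBBisimilar tr2 τ s2 t2) :
    DPBBisimilar (ParTr tr1 tr2) τ (s1, s2) (t1, t2) :=
  let ⟨_, hB1, hs1⟩ := h1
  let ⟨_, hB2, hs2⟩ := h2
  ⟨_, hB1.parTr hB2, hs1, hs2⟩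
end

section
/- Rooted divergence-preserving branching bisimilarity is compatible with non-deterministic choice: let s1, s2, t1, t2, u, v be states of a labelled transition system such that u →a w iff (s1 →a w or s2 →a w) for all actions a and states w, and v →a w iff (t1 →a w or t2 →a w) for all actions a and states w. If s1 is rooted divergence-preserving branching bisimilar to t1 and s2 is rooted divergence-preserving branching bisimilar to t2, then u is rooted divergence-preserving branching bisimilar to v. -/
/-- The root condition for states s and t with respect to a relation B. -/
def RootCond {S Act : Type*} (tr : S → Act → S → Prop) (B : S → S → Prop)
    (s t : S) : Prop :=
  (∀ a s', tr s a s' → ∃ t', tr t a t' ∧ B s' t') ∧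
  (∀ a t', tr t a t' → ∃ s', tr s a s' ∧ B s' t')

/-- Rooted divergence-preserving branching bisimilarity. -/
def RootedDPBBisimilar {S Act : Type*} (tr : S → Act → S → Prop) (τ : Act)
    (s t : S) : Prop :=
  ∃ B, IsDPBB tr τ B ∧ RootCond tr B s t ∧ B s t

/-!
A divergence-preserving branching bisimulation satisfies the stronger condition `CondDStrong`,
which drops the hypothesis of (D) that every state of the divergence is related to `t`: if some
state of the divergence is not related to `t`, then (T) already forces `t` to move by τ-steps
into the class of that state. Unlike (D), `CondDStrong` passes to unions of relations. So the
union `B₁ ∪ B₂` of the relations witnessing the two hypotheses is again a divergence-preserving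
branching bisimulation, and it satisfies the root condition for `u` and `v`, because every
initial step of `u` or `v` is an initial step of one of the summands. Adjoining `(u, v)` and
`(v, u)` keeps (T) and `CondDStrong`, as the root condition answers each first step of `u` by a
step of `v` and vice versa.
-/

section

variable {S Act : Type*} {tr : S → Act → S → Prop} {τ : Act} {B B₁ B₂ : S → S → Prop}

def CondDStrong (tr : S → Act → S → Prop) (τ : Act) (B : S → S → Prop) : Prop :=
  ∀ s t (sk : ℕ → S), B s t → sk 0 = s → (∀ k, tr (sk k) τ (sk (k + 1))) →
    ∃ t', TauPlus tr τ t t' ∧ ∃ k, B (sk k) t'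

def adjoinPair (B : S → S → Prop) (u v : S) : S → S → Prop :=
  fun x y => B x y ∨ (x = u ∧ y = v) ∨ (x = v ∧ y = u)

theorem CondT.related_or_tauPlus (hT : CondT tr τ B) {s s' t : S} (hst : B s t)
    (hs : tr s τ s') : B s' t ∨ ∃ t', TauPlus tr τ t t' ∧ B s' t' := by
  obtain ⟨t'', t', ht'', hstep | ⟨-, rfl⟩, -, hB'⟩ := hT _ _ _ _ hst hs
  · exact Or.inr ⟨t', Relation.TransGen.tail' ht'' hstep, hB'⟩
  · rcases Relation.reflTransGen_iff_eq_or_transGen.mp ht'' with rfl | hplus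
    · exact Or.inl hB'
    · exact Or.inr ⟨t'', hplus, hB'⟩

theorem IsDPBB.condDStrong (hB : IsDPBB tr τ B) : CondDStrong tr τ B := by
  intro s t sk hst h0 hstep
  by_contra hnone
  have hall : ∀ k, B (sk k) t := by
    intro k
    induction k with
    | zero => exact h0 ▸ hst
    | succ k ih =>
      refine (hB.1.2.related_or_tauPlus ih (hstep k)).resolve_right ?_
      rintro ⟨t', hplus, hB'⟩
      exact hnone ⟨t', hplus, k + 1, hB'⟩
  exact hnone (hB.2 s t sk hst h0 hstep hall)

theorem IsDPBB.of_condDStrong (hsymm : Symmetric B) (hT : CondT tr τ B)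
    (hD : CondDStrong tr τ B) : IsDPBB tr τ B :=
  ⟨⟨hsymm, hT⟩, fun s t sk hst h0 hstep _ => hD s t sk hst h0 hstep⟩

theorem IsDPBB.sup (hB₁ : IsDPBB tr τ B₁) (hB₂ : IsDPBB tr τ B₂) :
    IsDPBB tr τ (B₁ ⊔ B₂) := by
  refine .of_condDStrong ?_ ?_ ?_
  · rintro x y (h | h)
    exacts [Or.inl (hB₁.1.1 h), Or.inr (hB₂.1.1 h)]
  · rintro s t a s' (h | h) hs
    · obtain ⟨t'', t', ht'', ht', h₁, h₂⟩ := hB₁.1.2 s t a s' h hs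
      exact ⟨t'', t', ht'', ht', Or.inl h₁, Or.inl h₂⟩
    · obtain ⟨t'', t', ht'', ht', h₁, h₂⟩ := hB₂.1.2 s t a s' h hs
      exact ⟨t'', t', ht'', ht', Or.inr h₁, Or.inr h₂⟩
  · rintro s t sk (h | h) h0 hstep
    · obtain ⟨t', hplus, k, hk⟩ := hB₁.condDStrong s t sk h h0 hstep
      exact ⟨t', hplus, k, Or.inl hk⟩
    · obtain ⟨t', hplus, k, hk⟩ := hB₂.condDStrong s t sk h h0 hstep
      exact ⟨t', hplus, k, Or.inr hk⟩

theorem RootCond.symm (hsymm : Symmetric B) {u v : S} (hr : RootCond tr B u v) :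
    RootCond tr B v u :=
  ⟨fun a s' hs => (hr.2 a s' hs).imp fun _ h => ⟨h.1, hsymm h.2⟩,
    fun a t' ht => (hr.1 a t' ht).imp fun _ h => ⟨h.1, hsymm h.2⟩⟩

theorem RootCond.mono {s t : S} (hr : RootCond tr B₁ s t) (hle : B₁ ≤ B₂) :
    RootCond tr B₂ s t :=
  ⟨fun a s' hs => (hr.1 a s' hs).imp fun _ h => ⟨h.1, hle _ _ h.2⟩,
    fun a t' ht => (hr.2 a t' ht).imp fun _ h => ⟨h.1, hle _ _ h.2⟩⟩

theorem RootCond.choice {s₁ s₂ t₁ t₂ u v : S} (hr₁ : RootCond tr B₁ s₁ t₁)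
    (hr₂ : RootCond tr B₂ s₂ t₂) (hu : ∀ a w, tr u a w ↔ (tr s₁ a w ∨ tr s₂ a w))
    (hv : ∀ a w, tr v a w ↔ (tr t₁ a w ∨ tr t₂ a w)) : RootCond tr (B₁ ⊔ B₂) u v := by
  constructor
  · intro a s' hs
    rcases (hu a s').mp hs with h | h
    · obtain ⟨t', ht', hB⟩ := hr₁.1 a s' h
      exact ⟨t', (hv a t').mpr (Or.inl ht'), Or.inl hB⟩
    · obtain ⟨t', ht', hB⟩ := hr₂.1 a s' h
      exact ⟨t', (hv a t').mpr (Or.inr ht'), Or.inr hB⟩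
  · intro a t' ht
    rcases (hv a t').mp ht with h | h
    · obtain ⟨s', hs', hB⟩ := hr₁.2 a t' h
      exact ⟨s', (hu a s').mpr (Or.inl hs'), Or.inl hB⟩
    · obtain ⟨s', hs', hB⟩ := hr₂.2 a t' h
      exact ⟨s', (hu a s').mpr (Or.inr hs'), Or.inr hB⟩

theorem IsDPBB.adjoinPair_of_rootCond (hB : IsDPBB tr τ B) {u v : S} (hr : RootCond tr B u v) :
    IsDPBB tr τ (adjoinPair B u v) := by
  have hroot : ∀ x y, (x = u ∧ y = v) ∨ (x = v ∧ y = u) → RootCond tr B x y := by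
    rintro x y (⟨rfl, rfl⟩ | ⟨rfl, rfl⟩)
    exacts [hr, hr.symm hB.1.1]
  refine .of_condDStrong ?_ ?_ ?_
  · rintro x y (h | ⟨rfl, rfl⟩ | ⟨rfl, rfl⟩)
    exacts [Or.inl (hB.1.1 h), Or.inr (Or.inr ⟨rfl, rfl⟩), Or.inr (Or.inl ⟨rfl, rfl⟩)]
  · rintro s t a s' (h | hpair) hs
    · obtain ⟨t'', t', ht'', ht', h₁, h₂⟩ := hB.1.2 s t a s' h hs
      exact ⟨t'', t', ht'', ht', Or.inl h₁, Or.inl h₂⟩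
    · obtain ⟨t', ht', hB'⟩ := (hroot s t hpair).1 a s' hs
      exact ⟨t, t', .refl, Or.inl ht', Or.inr hpair, Or.inl hB'⟩
  · rintro s t sk (h | hpair) h0 hstep
    · obtain ⟨t', hplus, k, hk⟩ := hB.condDStrong s t sk h h0 hstep
      exact ⟨t', hplus, k, Or.inl hk⟩
    · obtain ⟨t', ht', hB'⟩ := (hroot s t hpair).1 τ (sk 1) (h0 ▸ hstep 0)
      exact ⟨t', .single ht', 1, Or.inl hB'⟩

theorem rootedDPBBisimilar_of_rootCond (hB : IsDPBB tr τ B) {u v : S}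
    (hr : RootCond tr B u v) : RootedDPBBisimilar tr τ u v :=
  ⟨adjoinPair B u v, hB.adjoinPair_of_rootCond hr, hr.mono fun _ _ => Or.inl,
    Or.inr (Or.inl ⟨rfl, rfl⟩)⟩

end

/-- rooted divergence-preserving branching bisimilarity is compatible
with non-deterministic choice. -/
theorem rooted_dpbb_choice_compatible {S Act : Type*} (tr : S → Act → S → Prop)
    (τ : Act) (s1 s2 t1 t2 u v : S)
    (hu : ∀ (a : Act) (w : S), tr u a w ↔ (tr s1 a w ∨ tr s2 a w))
    (hv : ∀ (a : Act) (w : S), tr v a w ↔ (tr t1 a w ∨ tr t2 a w))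
    (h1 : RootedDPBBisimilar tr τ s1 t1) (h2 : RootedDPBBisimilar tr τ s2 t2) :
    RootedDPBBisimilar tr τ u v := by
  obtain ⟨B₁, hB₁, hr₁, -⟩ := h1
  obtain ⟨B₂, hB₂, hr₂, -⟩ := h2
  exact rootedDPBBisimilar_of_rootCond (hB₁.sup hB₂) (hr₁.choice hr₂ hu hv)
end
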